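/- Let V be a finite-dimensional vector space with 𝕍 = V ⊕ V* = E ⊕ F a splitting into transverse Lagrangian subspaces, with associated projection p (range E, kernel F, p + pᵗ = 1). Define the bivector π ∈ ∧²V by π(α, β) = ⟨α, p(β)⟩ for α, β ∈ V*. Then if {e_i} is a basis of E and {f^i} the dual basis of F (i.e. ⟨e_i, f^j⟩ = δ_i^j), one has π = (1/2) Σ_i pr_V(e_i) ∧ pr_V(f^i), where pr_V: 𝕍 → V is the projection along V*. -/

import Mathlib

set_option synthInstance.maxHeartbeats 1000000
set_option maxHeartbeats 1000000

open ExteriorAlgebra CliffordAlgebra Module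

/-- The pairing bilinear form on `𝕍 = V ⊕ V*`. -/
noncomputable def vPairing (K V : Type*) [Field K] [AddCommGroup V] [Module K V] :
    LinearMap.BilinForm K (V × Module.Dual K V) :=
  LinearMap.mk₂ K (fun w u => w.2 u.1 + u.2 w.1)
    (fun w w' u => by simp; ring)
    (fun c w u => by simp; ring)
    (fun w u u' => by simp; ring)
    (fun c w u => by simp; ring)

/-!
Write `(0, α) = u + v` with `u = p (0, α) ∈ E` and `v ∈ F`. Since `F` is isotropic,
`⟨u, f^i⟩ = ⟨(0, α), f^i⟩ = α (pr_V f^i)`, so the dual-basis expansion gives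
`u = Σ α (pr_V f^i) e_i`; symmetrically `v = Σ α (pr_V e_i) f^i`. Contracting `Σ e_i ∧ f^i`
with `α` yields `pr_V v - pr_V u`, and `pr_V u + pr_V v = pr_V (0, α) = 0`, so this is
`-2 pr_V u`.
-/

theorem LinearMap.BilinForm.sum_apply_smul_eq_of_mem_span {R M ι : Type*} [CommSemiring R]
    [AddCommMonoid M] [Module R M] [Fintype ι] [DecidableEq ι] (B : LinearMap.BilinForm R M)
    {e f : ι → M} (hdual : ∀ i j, B (e i) (f j) = if i = j then 1 else 0) {u : M}
    (hu : u ∈ Submodule.span R (Set.range e)) :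
    ∑ i, B u (f i) • e i = u := by
  obtain ⟨c, rfl⟩ := (Submodule.mem_span_range_iff_exists_fun R).mp hu
  simp [hdual]

theorem CliffordAlgebra.contractLeft_sum_ι_mul_ι {R M ι : Type*} [CommRing R] [AddCommGroup M]
    [Module R M] [Fintype ι] (d : Module.Dual R M) (x y : ι → M) :
    contractLeft d (∑ i, ExteriorAlgebra.ι R (x i) * ExteriorAlgebra.ι R (y i)) =
      ExteriorAlgebra.ι R (∑ i, d (x i) • y i - ∑ i, d (y i) • x i) := by
  simp only [map_sum, map_sub, map_smul, contractLeft_ι_mul, contractLeft_ι,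
    Algebra.algebraMap_eq_smul_one, mul_smul_comm, mul_one, Finset.sum_sub_distrib]

theorem vPairing_comm {K V : Type*} [Field K] [AddCommGroup V] [Module K V]
    (w u : V × Module.Dual K V) : vPairing K V w u = vPairing K V u w := by
  simp [vPairing, add_comm]

theorem vPairing_zero_left {K V : Type*} [Field K] [AddCommGroup V] [Module K V]
    (α : Module.Dual K V) (w : V × Module.Dual K V) : vPairing K V ((0 : V), α) w = α w.1 := by
  simp [vPairing]

theorem pure_spinors_stmt11_general {K V : Type*} [Field K] [CharZero K] [AddCommGroup V] [Module K V]
    (E F : Submodule K (V × Module.Dual K V))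
    (hElag : E = (vPairing K V).orthogonal E)
    (hFlag : F = (vPairing K V).orthogonal F)
    (hcompl : IsCompl E F)
    (p : (V × Module.Dual K V) →ₗ[K] (V × Module.Dual K V))
    (hpE : ∀ w ∈ E, p w = w) (hpF : ∀ w ∈ F, p w = 0)
    {n : ℕ} (e f : Fin n → V × Module.Dual K V)
    (heE : ∀ i, e i ∈ E) (hfF : ∀ i, f i ∈ F)
    (hespan : Submodule.span K (Set.range e) = E)
    (hfspan : Submodule.span K (Set.range f) = F)
    (hdual : ∀ i j, vPairing K V (e i) (f j) = if i = j then 1 else 0) :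
    ∀ α : Module.Dual K V,
      CliffordAlgebra.contractLeft α
          ((2 : K)⁻¹ • ∑ i, ExteriorAlgebra.ι K (e i).1 * ExteriorAlgebra.ι K (f i).1) =
        ExteriorAlgebra.ι K (-(p ((0 : V), α)).1) := by
  intro α
  have hmem : ((0 : V), α) ∈ E ⊔ F := hcompl.sup_eq_top ▸ Submodule.mem_top
  obtain ⟨u, hu, v, hv, huv⟩ := Submodule.mem_sup.mp hmem
  have hu_coeff : ∀ i, vPairing K V u (f i) = α (f i).1 := fun i => by
    rw [← vPairing_zero_left, ← huv, map_add, LinearMap.add_apply,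
      hFlag.le (hfF i) v hv, add_zero]
  have hv_coeff : ∀ i, vPairing K V v (e i) = α (e i).1 := fun i => by
    rw [← vPairing_zero_left, ← huv, map_add, LinearMap.add_apply,
      hElag.le (heE i) u hu, zero_add]
  have hdual' : ∀ i j, vPairing K V (f i) (e j) = if i = j then 1 else 0 := fun i j => by
    rw [vPairing_comm, hdual]; exact if_congr eq_comm rfl rfl
  have hu_sum : ∑ i, α (f i).1 • (e i).1 = u.1 :=
    calc ∑ i, α (f i).1 • (e i).1 = (∑ i, vPairing K V u (f i) • e i).1 := by
          simp only [Prod.fst_sum, Prod.smul_fst, hu_coeff]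
      _ = u.1 :=
          congrArg Prod.fst ((vPairing K V).sum_apply_smul_eq_of_mem_span hdual (hespan ▸ hu))
  have hv_sum : ∑ i, α (e i).1 • (f i).1 = v.1 :=
    calc ∑ i, α (e i).1 • (f i).1 = (∑ i, vPairing K V v (e i) • f i).1 := by
          simp only [Prod.fst_sum, Prod.smul_fst, hv_coeff]
      _ = v.1 :=
          congrArg Prod.fst ((vPairing K V).sum_apply_smul_eq_of_mem_span hdual' (hfspan ▸ hv))
  have hv_neg : v.1 = -u.1 := eq_neg_of_add_eq_zero_right (congrArg Prod.fst huv)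
  have hp : p ((0 : V), α) = u := by rw [← huv, map_add, hpE u hu, hpF v hv, add_zero]
  rw [map_smul, contractLeft_sum_ι_mul_ι, hv_sum, hu_sum, hv_neg, hp, ← map_smul,
    ← neg_add', ← two_smul K, smul_neg, inv_smul_smul₀ two_ne_zero]

/-- let `𝕍 = V ⊕ V* = E ⊕ F` be a Lagrangian splitting with projection `p`
(range `E`, kernel `F`), and let `{e_i}` be a basis of `E` with dual basis `{f^i}` of `F`
(`⟨e_i, f^j⟩ = δ_i^j`). Then the bivector `π ∈ ∧²V` of the splitting, characterized by
`π^♯(α) = -pr_V(p(α))`, equals `(1/2) Σ_i pr_V(e_i) ∧ pr_V(f^i)`; equivalently, contraction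
of the latter sum by any `α ∈ V*` gives `-pr_V(p(α))`. -/
theorem pure_spinors_stmt11 {K V : Type*} [Field K] [CharZero K] [AddCommGroup V] [Module K V]
    [FiniteDimensional K V]
    (E F : Submodule K (V × Module.Dual K V))
    (hElag : E = (vPairing K V).orthogonal E)
    (hFlag : F = (vPairing K V).orthogonal F)
    (hcompl : IsCompl E F)
    (p : (V × Module.Dual K V) →ₗ[K] (V × Module.Dual K V))
    (hpE : ∀ w ∈ E, p w = w) (hpF : ∀ w ∈ F, p w = 0)
    {n : ℕ} (e f : Fin n → V × Module.Dual K V)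
    (heE : ∀ i, e i ∈ E) (hfF : ∀ i, f i ∈ F)
    (heind : LinearIndependent K e) (hespan : Submodule.span K (Set.range e) = E)
    (hfind : LinearIndependent K f) (hfspan : Submodule.span K (Set.range f) = F)
    (hdual : ∀ i j, vPairing K V (e i) (f j) = if i = j then 1 else 0) :
    ∀ α : Module.Dual K V,
      CliffordAlgebra.contractLeft α
          ((2 : K)⁻¹ • ∑ i, ExteriorAlgebra.ι K (e i).1 * ExteriorAlgebra.ι K (f i).1) =
        ExteriorAlgebra.ι K (-(p ((0 : V), α)).1) :=
  pure_spinors_stmt11_general E F hElag hFlag hcompl p hpE hpF e f heE hfF hespan hfspan hdual
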